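/- arXiv:1203.4283 — 2 statements merged into one kernel-verified Lean document; each statement's English description precedes it below -/
import Mathlib

section
/- Let A be a local ring with maximal ideal m_A and residue field κ, let α be algebraic over κ with monic minimal polynomial Q, and let P ∈ A[X] be a monic lift of Q. Then the ring A' = A[X]/(P) is a local ring whose maximal ideal is m_A·A' and whose residue field is isomorphic to κ(α) = κ[X]/(Q). -/
/-!
Over a local ring `A`, every maximal ideal of an integral `A`-algebra `B` lies over `m_A`, hence
contains `m_A B`; so if `m_A B` is itself maximal, it is the unique maximal ideal. For
`B = A[X]/(P)` with `P` monic, `B` is finite over `A`, and `B / m_A B ≅ κ[X]/(P mod m_A)`, which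
is a field exactly when the reduction of `P` is irreducible, as the minimal polynomial `Q` is.
-/

open IsLocalRing Polynomial

section IntegralOverLocal

variable {A B : Type*} [CommRing A] [IsLocalRing A] [CommRing B] [Algebra A B]
  [Algebra.IsIntegral A B]

theorem map_maximalIdeal_le_of_isMaximal {M : Ideal B} (hM : M.IsMaximal) :
    (maximalIdeal A).map (algebraMap A B) ≤ M :=
  Ideal.map_le_iff_le_comap.mpr
    (eq_maximalIdeal (Ideal.isMaximal_comap_of_isIntegral_of_isMaximal M)).ge

theorem isLocalRing_of_isMaximal_map_maximalIdeal
    (h : ((maximalIdeal A).map (algebraMap A B)).IsMaximal) : IsLocalRing B :=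
  of_unique_max_ideal ⟨_, h, fun _ hM ↦
    (h.eq_of_le hM.ne_top (map_maximalIdeal_le_of_isMaximal hM)).symm⟩

end IntegralOverLocal

namespace AdjoinRoot

variable {A : Type*} [CommRing A] [IsLocalRing A] (P : A[X])

noncomputable def quotMapMaximalIdealEquiv :
    AdjoinRoot P ⧸ (maximalIdeal A).map (algebraMap A (AdjoinRoot P)) ≃+*
      AdjoinRoot (P.map (residue A)) :=
  quotAdjoinRootEquivQuotPolynomialQuot (maximalIdeal A) P

theorem isMaximal_map_maximalIdeal (hP : Irreducible (P.map (residue A))) :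
    ((maximalIdeal A).map (algebraMap A (AdjoinRoot P))).IsMaximal :=
  haveI : Fact (Irreducible (P.map (residue A))) := ⟨hP⟩
  Ideal.Quotient.maximal_of_isField _
    ((quotMapMaximalIdealEquiv P).toMulEquiv.isField (Field.toIsField _))

theorem isLocalRing_of_irreducible_map_residue {P : A[X]} (hmonic : P.Monic)
    (hP : Irreducible (P.map (residue A))) : IsLocalRing (AdjoinRoot P) :=
  haveI : Module.Finite A (AdjoinRoot P) := (powerBasis' hmonic).finite
  isLocalRing_of_isMaximal_map_maximalIdeal (isMaximal_map_maximalIdeal P hP)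

end AdjoinRoot

/-- Let `A` be a local ring with residue field `κ`, `α` algebraic over `κ`
with monic minimal polynomial `Q`, and `P ∈ A[X]` a monic lift of `Q`. Then
`A' = A[X]/(P)` is a local ring, its maximal ideal is `m_A · A'`, and its residue field
is isomorphic to `κ(α) = κ[X]/(Q)`. -/
theorem stmt0 {A : Type*} [CommRing A] [IsLocalRing A]
    {E : Type*} [Field E] [Algebra (IsLocalRing.ResidueField A) E]
    (α : E) (halg : IsIntegral (IsLocalRing.ResidueField A) α)
    (P : Polynomial A) (hmonic : P.Monic)
    (hlift : P.map (IsLocalRing.residue A) = minpoly (IsLocalRing.ResidueField A) α) :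
    ∃ h : IsLocalRing (AdjoinRoot P),
      @IsLocalRing.maximalIdeal (AdjoinRoot P) _ h
          = (IsLocalRing.maximalIdeal A).map (algebraMap A (AdjoinRoot P)) ∧
      Nonempty (@IsLocalRing.ResidueField (AdjoinRoot P) _ h ≃+*
        AdjoinRoot (minpoly (IsLocalRing.ResidueField A) α)) := by
  have hirr : Irreducible (P.map (residue A)) := hlift ▸ minpoly.irreducible halg
  have hloc := AdjoinRoot.isLocalRing_of_irreducible_map_residue hmonic hirr
  have hmax : maximalIdeal (AdjoinRoot P) = (maximalIdeal A).map (algebraMap A _) :=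
    (eq_maximalIdeal (AdjoinRoot.isMaximal_map_maximalIdeal P hirr)).symm
  refine ⟨hloc, hmax, ⟨?_⟩⟩
  rw [← hlift]
  exact (Ideal.quotEquivOfEq hmax).trans (AdjoinRoot.quotMapMaximalIdealEquiv P)
end

section
/- Let g, h be nonzero generalized power series in A[[t^G]] (A an integral domain, G an ordered abelian group) and λ ∈ G with v(gh) < λ. Then there exist a natural number l, elements λ_0 < λ_1 < ... < λ_l and δ_1 > δ_2 > ... > δ_l of G such that the truncation of the product satisfies (gh)(λ) = ∑_{i=1}^{l} g[λ_{i-1}, λ_i[ · h(δ_i). Moreover the sequences can be chosen so that λ_l ≤ λ - v(h) and δ_1 ≤ λ - v(g). -/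
/-!
For `a ∈ supp g`, the exponents `b ∈ supp h` with `a + b < λ` are exactly those below `δ(a)`, the
least element of `supp h ∪ {λ - v(g)}` that is `≥ λ - a`. The map `a ↦ δ(a)` is antitone from the
well-ordered set `supp g` into the well-ordered set `supp h ∪ {λ - v(g)}`, so it takes only
finitely many values `δ₁ > ⋯ > δ_l` on `supp g ∩ ]-∞, λ - v(h)[`, and the level sets are
consecutive intervals `[λ_{i-1}, λ_i[`. On each block `g[λ_{i-1}, λ_i[ · h(δ_i)` is the truncation
of `g[λ_{i-1}, λ_i[ · h` at `λ`; the blocks telescope to `g(λ - v(h))`, and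
`(g(λ - v(h)) · h)(λ) = (gh)(λ)`.
-/

open Set

/-- The open truncation `f(β) = ∑_{γ < β} a_γ t^γ` of a generalized power series. -/
noncomputable def truncLT {Γ A : Type*} [AddCommGroup Γ] [LinearOrder Γ] [IsOrderedAddMonoid Γ] [CommRing A]
    (f : HahnSeries Γ A) (β : Γ) : HahnSeries Γ A where
  coeff γ := if γ < β then f.coeff γ else 0
  isPWO_support' := f.isPWO_support.mono (fun γ hγ => by
    by_cases h : γ < β
    · simpa [Function.mem_support, h] using hγ
    · simp [Function.mem_support, h] at hγ)

theorem Fin.sum_univ_succ_sub_castSucc {M : Type*} [AddCommGroup M] :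
    ∀ {n : ℕ} (f : Fin (n + 1) → M), ∑ i : Fin n, (f i.succ - f i.castSucc) = f (Fin.last n) - f 0
  | 0, f => by simp
  | n + 1, f => by
    rw [Fin.sum_univ_castSucc]
    simp only [Fin.succ_castSucc]
    rw [Fin.sum_univ_succ_sub_castSucc (fun i => f i.castSucc)]
    simp

theorem Set.IsWF.finite_image_of_antitoneOn {α β : Type*} [LinearOrder α] [LinearOrder β]
    {S : Set α} {T : Set β} {d : α → β} (hS : S.IsWF) (hT : T.IsWF) (hd : AntitoneOn d S)
    (hdT : MapsTo d S T) : (d '' S).Finite := by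
  have : WellFoundedLT (d '' S) := ⟨(hT.mono (image_subset_iff.2 hdT))⟩
  have : WellFoundedGT (d '' S) := by
    have := (hS.isPWO.image_of_monotone_on (r' := (· ≥ ·)) hd).wellFoundedOn
    exact ⟨(this.mono' fun a _ b _ hab => ⟨hab.le, not_le.2 hab⟩ :
      (d '' S).WellFoundedOn (· > ·))⟩
  exact Set.finite_coe_iff.1 (Finite.of_wellFoundedLT_wellFoundedGT _)

theorem Set.IsWF.exists_monotone_ceil {α : Type*} [LinearOrder α] {T : Set α} (hT : T.IsWF)
    (c : α) :
    ∃ e : α → α, Monotone e ∧ (∀ x, e x ∈ insert c T) ∧ (∀ x, e x ≤ c) ∧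
      ∀ x ≤ c, ∀ b ∈ T, b < e x ↔ b < x := by
  have hT' : (insert c T).IsWF := hT.insert c
  have hne : ∀ x, (insert c T ∩ Ici (Min.min x c)).Nonempty :=
    fun x => ⟨c, mem_insert c T, min_le_right x c⟩
  refine ⟨fun x => (hT'.mono inter_subset_left).min (hne x), fun x y hxy => ?_,
    fun x => ((hT'.mono inter_subset_left).min_mem (hne x)).1,
    fun x => (hT'.mono inter_subset_left).min_le (hne x) ⟨mem_insert c T, min_le_right x c⟩,
    fun x hx b hb => ⟨fun hbe => ?_, fun hbx => ?_⟩⟩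
  · exact IsWF.min_le_min_of_subset
      (inter_subset_inter_right _ (Ici_subset_Ici.2 (_root_.min_le_min_right c hxy)))
  · by_contra! hxb
    refine hbe.not_ge ((hT'.mono inter_subset_left).min_le (hne x) ⟨mem_insert_of_mem c hb, ?_⟩)
    simpa [min_eq_left hx] using hxb
  · have := ((hT'.mono inter_subset_left).min_mem (hne x)).2
    exact hbx.trans_le ((min_eq_left hx).symm.trans_le this)

section Partition

variable {α β : Type*} [LinearOrder α] [LinearOrder β] {S : Set α} {d : α → β} {M : α}

theorem exists_threshold_of_antitoneOn (hS : S.IsWF) (hd : AntitoneOn d S)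
    (hM : ∀ a ∈ S, a < M) :
    ∃ s : β → α, ∀ δ, (s δ = M ∨ s δ ∈ S) ∧ ∀ a ∈ S, (s δ ≤ a ↔ d a ≤ δ) := by
  have hwf : ∀ δ, (insert M {a ∈ S | d a ≤ δ}).IsWF :=
    fun δ => (hS.mono (sep_subset S _)).insert M
  have hne : ∀ δ, (insert M {a ∈ S | d a ≤ δ}).Nonempty := fun δ => insert_nonempty _ _
  refine ⟨fun δ => (hwf δ).min (hne δ), fun δ => ?_⟩
  have hmem := (hwf δ).min_mem (hne δ)
  refine ⟨hmem.imp_right (·.1), fun a ha =>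
    ⟨fun hle => ?_, fun hda => (hwf δ).min_le _ (.inr ⟨ha, hda⟩)⟩⟩
  rcases hmem with hM' | ⟨hmS, hmd⟩
  · exact absurd (hM' ▸ hle) (hM a ha).not_ge
  · exact (hd hmS ha hle).trans hmd

theorem exists_partition_of_antitoneOn (hS : S.IsWF) (hd : AntitoneOn d S)
    (hfin : (d '' S).Finite) (hM : ∀ a ∈ S, a < M) :
    ∃ (l : ℕ) (lam : Fin (l + 1) → α) (del : Fin l → β),
      StrictMono lam ∧ StrictAnti del ∧ lam (Fin.last l) = M ∧ (∀ i, del i ∈ d '' S) ∧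
      (∀ a ∈ S, lam 0 ≤ a) ∧
      ∀ a ∈ S, ∀ i, (lam i.castSucc ≤ a ∧ a < lam i.succ ↔ d a = del i) := by
  obtain ⟨s, hs⟩ := exists_threshold_of_antitoneOn hS hd hM
  set e := hfin.toFinset.orderEmbOfFin rfl
  set del : Fin hfin.toFinset.card → β := fun i => e i.rev
  set lam : Fin (hfin.toFinset.card + 1) → α := Fin.snoc (fun i => s (del i)) M
  have del_anti : StrictAnti del := e.strictMono.comp_strictAnti Fin.rev_strictAnti
  have del_mem : ∀ i, del i ∈ d '' S :=
    fun i => hfin.mem_toFinset.1 (Finset.orderEmbOfFin_mem _ _ _)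
  have del_surj : ∀ a ∈ S, ∃ k, d a = del k := by
    intro a ha
    obtain ⟨j, hj⟩ : d a ∈ range e := by
      rw [Finset.range_orderEmbOfFin]; exact hfin.mem_toFinset.2 (mem_image_of_mem d ha)
    exact ⟨j.rev, by simp [del, hj]⟩
  have lam_le_iff : ∀ a ∈ S, ∀ k, d a = del k → ∀ j, (lam j ≤ a ↔ j ≤ k.castSucc) := by
    intro a ha k hk j
    induction j using Fin.lastCases with
    | last => simp [lam, (hM a ha).not_ge]
    | cast j => simp [lam, (hs _).2 a ha, hk, del_anti.le_iff_ge]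
  have block : ∀ a ∈ S, ∀ i, (lam i.castSucc ≤ a ∧ a < lam i.succ ↔ d a = del i) := by
    intro a ha i
    obtain ⟨k, hk⟩ := del_surj a ha
    rw [← not_le, lam_le_iff a ha k hk, lam_le_iff a ha k hk, hk, del_anti.injective.eq_iff]
    simp only [Fin.castSucc_le_castSucc_iff, Fin.succ_le_castSucc_iff, not_lt]
    exact ⟨fun h => le_antisymm h.2 h.1, fun h => ⟨h.ge, h.le⟩⟩
  refine ⟨_, lam, del, Fin.strictMono_iff_lt_succ.2 fun i => ?_, del_anti, by simp [lam],
    del_mem, fun a ha => ?_, block⟩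
  · obtain ⟨a, ha, hda⟩ := del_mem i
    have hsa : s (del i) ≤ a := ((hs _).2 a ha).2 hda.le
    have hsS : s (del i) ∈ S := ((hs _).1.resolve_left fun h => (hM a ha).not_ge (h ▸ hsa))
    have hds : d (s (del i)) = del i :=
      le_antisymm (((hs _).2 _ hsS).1 le_rfl) (hda ▸ hd hsS ha hsa)
    have := (block _ hsS i).2 hds
    exact this.1.trans_lt this.2
  · obtain ⟨k, hk⟩ := del_surj a ha
    exact (lam_le_iff a ha k hk 0).2 (Fin.zero_le _)

end Partition

section Truncation

variable {Γ A : Type*} [AddCommGroup Γ] [LinearOrder Γ] [IsOrderedAddMonoid Γ] [CommRing A]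

theorem coeff_truncLT (f : HahnSeries Γ A) (β γ : Γ) :
    (truncLT f β).coeff γ = if γ < β then f.coeff γ else 0 := rfl

theorem support_truncLT_subset (f : HahnSeries Γ A) (β : Γ) :
    (truncLT f β).support ⊆ f.support :=
  HahnSeries.support_truncLT_subset β f

theorem truncLT_sum {ι : Type*} (s : Finset ι) (f : ι → HahnSeries Γ A) (β : Γ) :
    truncLT (∑ i ∈ s, f i) β = ∑ i ∈ s, truncLT (f i) β :=
  map_sum (HahnSeries.truncLTLinearMap A β) f s

theorem truncLT_eq_zero {f : HahnSeries Γ A} {β : Γ} (hf : ∀ a ∈ f.support, β ≤ a) :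
    truncLT f β = 0 := by
  ext γ
  rw [coeff_truncLT, HahnSeries.coeff_zero, ite_eq_right_iff]
  exact fun hγ => by_contra fun h => (hf γ h).not_gt hγ

theorem mul_truncLT_eq_truncLT_mul {x y : HahnSeries Γ A} {δ lam : Γ}
    (H : ∀ a ∈ x.support, ∀ b ∈ y.support, b < δ ↔ a + b < lam) :
    x * truncLT y δ = truncLT (x * y) lam := by
  ext γ
  rw [HahnSeries.coeff_mul_right' y.isPWO_support (support_truncLT_subset y δ),
    coeff_truncLT, HahnSeries.coeff_mul, ← Finset.sum_const_zero, ← Finset.sum_ite_irrel]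
  refine Finset.sum_congr rfl fun ij hij => ?_
  rw [Finset.mem_antidiagonal] at hij
  obtain ⟨ha, hb, rfl⟩ := hij
  rw [coeff_truncLT, mul_ite, mul_zero]
  exact if_congr (H _ ha _ hb) rfl rfl

theorem truncLT_truncLT_mul {x y : HahnSeries Γ A} {μ lam : Γ} (hμ : lam ≤ μ + y.order) :
    truncLT (truncLT x μ * y) lam = truncLT (x * y) lam := by
  ext γ
  rw [coeff_truncLT, coeff_truncLT, HahnSeries.coeff_mul_left' x.isPWO_support
    (support_truncLT_subset x μ), HahnSeries.coeff_mul]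
  split_ifs with hγ
  · refine Finset.sum_congr rfl fun ij hij => ?_
    rw [Finset.mem_antidiagonal] at hij
    obtain ⟨-, hb, rfl⟩ := hij
    have : ij.1 < μ := by
      by_contra! h
      exact (hμ.trans (add_le_add h (HahnSeries.order_le_of_coeff_ne_zero hb))).not_gt hγ
    rw [coeff_truncLT, if_pos this]
  · rfl

theorem mem_support_truncLT_sub {f : HahnSeries Γ A} {β β' a : Γ} (hβ : β ≤ β')
    (ha : a ∈ (truncLT f β' - truncLT f β).support) : a ∈ f.support ∧ β ≤ a ∧ a < β' := by
  rw [HahnSeries.mem_support, HahnSeries.coeff_sub, coeff_truncLT, coeff_truncLT] at ha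
  have hlt : a < β' := by_contra fun h => ha (by simp [h, not_lt.2 ((not_lt.1 h).trans' hβ)])
  have hle : β ≤ a := not_lt.1 fun h => ha (by simp [h, hlt])
  exact ⟨fun h => ha (by simp [h]), hle, hlt⟩

theorem truncLT_mul_eq_sum {g h : HahnSeries Γ A} {lam : Γ} {l : ℕ} (lam' : Fin (l + 1) → Γ)
    (del : Fin l → Γ) (hmono : Monotone lam') (h0 : ∀ a ∈ g.support, lam' 0 ≤ a)
    (hlast : lam ≤ lam' (Fin.last l) + h.order)
    (hblock : ∀ i, ∀ a ∈ g.support, lam' i.castSucc ≤ a → a < lam' i.succ →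
      ∀ b ∈ h.support, (b < del i ↔ a + b < lam)) :
    truncLT (g * h) lam =
      ∑ i, (truncLT g (lam' i.succ) - truncLT g (lam' i.castSucc)) * truncLT h (del i) := by
  calc truncLT (g * h) lam
      = truncLT ((truncLT g (lam' (Fin.last l)) - truncLT g (lam' 0)) * h) lam := by
        rw [truncLT_eq_zero h0, sub_zero, truncLT_truncLT_mul hlast]
    _ = ∑ i, truncLT ((truncLT g (lam' i.succ) - truncLT g (lam' i.castSucc)) * h) lam := by
        rw [← truncLT_sum, ← Finset.sum_mul]
        exact congrArg (truncLT · lam) (congrArg (· * h)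
          (Fin.sum_univ_succ_sub_castSucc fun j => truncLT g (lam' j)).symm)
    _ = _ := Finset.sum_congr rfl fun i _ => (mul_truncLT_eq_truncLT_mul fun a ha =>
        let ⟨hag, hlo, hhi⟩ := mem_support_truncLT_sub (hmono (Fin.castSucc_le_succ i)) ha
        hblock i a hag hlo hhi).symm

end Truncation

theorem stmt8_general {Γ A : Type*} [AddCommGroup Γ] [LinearOrder Γ] [IsOrderedAddMonoid Γ] [CommRing A]
    (g h : HahnSeries Γ A)
    (lam : Γ) :
    ∃ (l : ℕ) (lam' : Fin (l + 1) → Γ) (del : Fin l → Γ),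
      StrictMono lam' ∧ StrictAnti del ∧
      (∀ i, lam' i ≤ lam - h.order) ∧
      (∀ i, del i ≤ lam - g.order) ∧
      truncLT (g * h) lam =
        ∑ i : Fin l,
          (truncLT g (lam' i.succ) - truncLT g (lam' i.castSucc)) * truncLT h (del i) := by
  obtain ⟨e, he_mono, he_mem, he_le, he_lt⟩ :=
    h.isWF_support.exists_monotone_ceil (lam - g.order)
  set S := {a ∈ g.support | a < lam - h.order}
  have hS : S.IsWF := g.isWF_support.mono (sep_subset _ _)
  have hd : AntitoneOn (fun a => e (lam - a)) S :=
    fun a _ b _ hab => he_mono (sub_le_sub_left hab lam)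
  have hcut : ∀ a ∈ g.support, ∀ b ∈ h.support, b < e (lam - a) ↔ a + b < lam := by
    intro a ha b hb
    rw [he_lt _ (sub_le_sub_left (HahnSeries.order_le_of_coeff_ne_zero ha) lam) b hb,
      lt_sub_iff_add_lt']
  obtain ⟨l, lam', del, hmono, hanti, hlast, hdel, h0, hblock⟩ :=
    exists_partition_of_antitoneOn hS hd
      (hS.finite_image_of_antitoneOn (h.isWF_support.insert _) hd fun _ _ => he_mem _)
      fun a ha => ha.2
  have hle : ∀ i, lam' i ≤ lam - h.order := fun i => hlast ▸ hmono.monotone (Fin.le_last i)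
  refine ⟨l, lam', del, hmono, hanti, hle, fun i => ?_,
    truncLT_mul_eq_sum lam' del hmono.monotone (fun a ha => ?_) (by rw [hlast, sub_add_cancel])
      fun i a ha hlo hhi => ?_⟩
  · obtain ⟨a, -, ha⟩ := hdel i
    exact ha ▸ he_le _
  · by_cases haS : a < lam - h.order
    · exact h0 a ⟨ha, haS⟩
    · exact (hle 0).trans (not_lt.1 haS)
  · rw [← (hblock a ⟨ha, hhi.trans_le (hle _)⟩ i).1 ⟨hlo, hhi⟩]
    exact hcut a ha

/-- Let `g`, `h` be nonzero generalized power series and `λ ∈ Γ` with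
`v(gh) < λ`. Then there are `l : ℕ`, `λ₀ < λ₁ < ⋯ < λ_l` and `δ₁ > ⋯ > δ_l` in `Γ` such that
`(gh)(λ) = ∑_{i=1}^{l} g[λ_{i-1}, λ_i[ · h(δ_i)`, where `g[λ_{i-1},λ_i[ = g(λ_i) - g(λ_{i-1})`.
Moreover the sequences can be chosen with `λ_l ≤ λ - v(h)` and `δ₁ ≤ λ - v(g)`. -/
theorem stmt8 {Γ A : Type*} [AddCommGroup Γ] [LinearOrder Γ] [IsOrderedAddMonoid Γ] [CommRing A] [IsDomain A]
    (g h : HahnSeries Γ A) (hg : g ≠ 0) (hh : h ≠ 0)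
    (lam : Γ) (hlt : (g * h).order < lam) :
    ∃ (l : ℕ) (lam' : Fin (l + 1) → Γ) (del : Fin l → Γ),
      StrictMono lam' ∧ StrictAnti del ∧
      (∀ i, lam' i ≤ lam - h.order) ∧
      (∀ i, del i ≤ lam - g.order) ∧
      truncLT (g * h) lam =
        ∑ i : Fin l,
          (truncLT g (lam' i.succ) - truncLT g (lam' i.castSucc)) * truncLT h (del i) :=
  stmt8_general g h lam
end
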